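/- Let I, K, c, t be real numbers with I > κ₀·c, K > (κ₀+2)·c, c > 0, 0 ≤ t ≤ 1, where κ₀ > 6 is the positive root of κ³ − 2κ² − 28κ − 72, and let x ∈ [0,1] (representing |φ|²). Then P := −4ct x/I − 4c²t(1−x)x/(IK) + 1 + 2cx/K + 16c³t(1−tx)(1−x)x/(IK²) − 2c(1−x)/K + 8c²t(1−x)x/(IK) satisfies P ≥ −4c/I − 4c²/(IK) + 1 − 2c/K > 1 − 6/κ₀ > 0. -/
import Mathlib


/-- Positivity of the coefficient `P` in the openness argument of the J-vortex continuity
method: with `I > κ₀c`, `K > (κ₀+2)c`, `c > 0`, `t, x ∈ [0,1]`, `κ₀ > 6` a root of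
`κ³ − 2κ² − 28κ − 72`, the quantity `P` satisfies
`P ≥ −4c/I − 4c²/(IK) + 1 − 2c/K > 1 − 6/κ₀ > 0`. -/
theorem stmt15 (I K c t x κ₀ : ℝ)
    (hκ6 : 6 < κ₀) (hκroot : κ₀ ^ 3 - 2 * κ₀ ^ 2 - 28 * κ₀ - 72 = 0)
    (hc : 0 < c) (hI : κ₀ * c < I) (hK : (κ₀ + 2) * c < K)
    (ht0 : 0 ≤ t) (ht1 : t ≤ 1) (hx0 : 0 ≤ x) (hx1 : x ≤ 1) :
    let P : ℝ := -4 * c * t * x / I - 4 * c ^ 2 * t * (1 - x) * x / (I * K) + 1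
      + 2 * c * x / K + 16 * c ^ 3 * t * (1 - t * x) * (1 - x) * x / (I * K ^ 2)
      - 2 * c * (1 - x) / K + 8 * c ^ 2 * t * (1 - x) * x / (I * K)
    (-4 * c / I - 4 * c ^ 2 / (I * K) + 1 - 2 * c / K ≤ P) ∧
      (1 - 6 / κ₀ < -4 * c / I - 4 * c ^ 2 / (I * K) + 1 - 2 * c / K) ∧
      (0 < 1 - 6 / κ₀) := by
  intro P
  have hκ0 : (0:ℝ) < κ₀ := by linarith
  have hI0 : (0:ℝ) < I := lt_trans (by positivity) hI
  have hK0 : (0:ℝ) < K := lt_trans (by positivity) hK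
  have htx : t * x ≤ 1 := by nlinarith
  have htx' : t * ((1 - x) * x) ≤ 1 := by nlinarith
  refine ⟨?_, ?_, ?_⟩
  · have hA : 0 ≤ 4 * c * (1 - t * x) / I := by
      apply div_nonneg _ hI0.le; nlinarith
    have hB : 0 ≤ 4 * c ^ 2 * (1 - t * ((1 - x) * x)) / (I * K) := by
      apply div_nonneg _ (by positivity); nlinarith
    have hC : 0 ≤ 4 * c * x / K := by positivity
    have hD : 0 ≤ 16 * c ^ 3 * t * (1 - t * x) * (1 - x) * x / (I * K ^ 2) := by
      apply div_nonneg _ (by positivity)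
      have : 0 ≤ 1 - t * x := by linarith
      have h1x : 0 ≤ 1 - x := by linarith
      positivity
    have hE : 0 ≤ 8 * c ^ 2 * t * (1 - x) * x / (I * K) := by
      have h1x : 0 ≤ 1 - x := by linarith
      positivity
    have hid : P = (-4 * c / I - 4 * c ^ 2 / (I * K) + 1 - 2 * c / K)
        + (4 * c * (1 - t * x) / I + 4 * c ^ 2 * (1 - t * ((1 - x) * x)) / (I * K)
          + 4 * c * x / K + 16 * c ^ 3 * t * (1 - t * x) * (1 - x) * x / (I * K ^ 2)
          + 8 * c ^ 2 * t * (1 - x) * x / (I * K)) := by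
      show (-4 * c * t * x / I - 4 * c ^ 2 * t * (1 - x) * x / (I * K) + 1
        + 2 * c * x / K + 16 * c ^ 3 * t * (1 - t * x) * (1 - x) * x / (I * K ^ 2)
        - 2 * c * (1 - x) / K + 8 * c ^ 2 * t * (1 - x) * x / (I * K)) = _
      field_simp
      ring
    rw [hid]
    linarith
  · have h1 : 4 * c / I < 4 / κ₀ := by
      rw [div_lt_div_iff₀ hI0 hκ0]; nlinarith
    have h2 : 2 * c / K < 2 / (κ₀ + 2) := by
      rw [div_lt_div_iff₀ hK0 (by linarith)]; nlinarith
    have h3 : 4 * c ^ 2 / (I * K) < 4 / (κ₀ * (κ₀ + 2)) := by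
      rw [div_lt_div_iff₀ (by positivity) (by positivity)]
      nlinarith [mul_lt_mul'' hI hK (by positivity : (0:ℝ) < κ₀ * c).le (by positivity : (0:ℝ) < (κ₀ + 2) * c).le]
    have h4 : 4 / κ₀ + 2 / (κ₀ + 2) + 4 / (κ₀ * (κ₀ + 2)) = 6 / κ₀ := by
      field_simp
      ring
    have e1 : -4 * c / I = -(4 * c / I) := by ring
    have e2 : -4 * c ^ 2 / (I * K) = -(4 * c ^ 2 / (I * K)) := by ring
    linarith
  · have : 6 / κ₀ < 1 := by rw [div_lt_one hκ0]; linarith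
    linarith
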